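/- arXiv:2402.10571 — 2 statements merged into one kernel-verified Lean document; each statement's English description precedes it below -/
import Mathlib

section
/- Let X ~ Gumbel(a, 1) and Y ~ Gumbel(b, 1) be independent. Then for any real δ, P(X - Y > δ) = σ((a - b) - δ), where σ is the logistic sigmoid. -/
/-!
Conditioning on `X`, `P(X - Y > δ) = E[F_b(X - δ)]`, where `F_c(x) = exp (-exp (-(x - c)))`
is the Gumbel CDF. Since `F_b(x - δ) = F_a(x) ^ k` with `k = exp (-((a - b) - δ))`, and
`F_a' · F_a ^ k` is the derivative of `F_a ^ (1 + k) / (1 + k)`, this expectation is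
`1 / (1 + k) = σ((a - b) - δ)`. Below, `gumbelCDF r c` is the power `F_c ^ r` and `gumbelPDF r c`
its derivative.
-/

open MeasureTheory ProbabilityTheory Real

noncomputable def sigma (x : ℝ) : ℝ := 1 / (1 + Real.exp (-x))

open Filter Topology
open Set (Iic Iio univ)

noncomputable def gumbelCDF (r c x : ℝ) : ℝ := exp (-(r * exp (-(x - c))))

noncomputable def gumbelPDF (r c x : ℝ) : ℝ := r * exp (-(x - c)) * exp (-(r * exp (-(x - c))))

lemma integrable_deriv_of_nonneg_of_bounded {g g' : ℝ → ℝ} {m M : ℝ}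
    (hderiv : ∀ x, HasDerivAt g (g' x) x) (hg' : ∀ x, 0 ≤ g' x)
    (hbdd : ∀ x, g x ∈ Set.Icc m M) : Integrable g' := by
  have hmono : Monotone g := monotone_of_hasDerivAt_nonneg hderiv hg'
  have hlint : ∫⁻ x, ENNReal.ofReal (g' x) = volume (g '' univ) := by
    simpa using lintegral_deriv_eq_volume_image_of_monotoneOn MeasurableSet.univ
      (fun x _ => (hderiv x).hasDerivWithinAt) (hmono.monotoneOn univ)
  have hmeas : Measurable g' := by
    rw [show g' = deriv g from funext fun x => (hderiv x).deriv.symm]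
    exact measurable_deriv g
  refine ⟨hmeas.aestronglyMeasurable, (hasFiniteIntegral_iff_ofReal (ae_of_all _ hg')).2 ?_⟩
  calc ∫⁻ x, ENNReal.ofReal (g' x) = volume (g '' univ) := hlint
    _ ≤ volume (Set.Icc m M) := measure_mono (by rintro _ ⟨x, -, rfl⟩; exact hbdd x)
    _ < ⊤ := measure_Icc_lt_top

section Gumbel

variable {r : ℝ} (c : ℝ)

lemma hasDerivAt_gumbelCDF (r x : ℝ) : HasDerivAt (gumbelCDF r c) (gumbelPDF r c x) x := by
  have h : HasDerivAt (fun x => exp (-(r * exp (-(x - c)))))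
      (exp (-(r * exp (-(x - c)))) * -(r * (exp (-(x - c)) * -1))) x :=
    ((((hasDerivAt_id' x).sub_const c).neg.exp).const_mul r).neg.exp
  exact h.congr_deriv (by rw [gumbelPDF]; ring)

lemma gumbelPDF_nonneg (hr : 0 ≤ r) (x : ℝ) : 0 ≤ gumbelPDF r c x := by
  unfold gumbelPDF; positivity

lemma gumbelCDF_mem_Icc (hr : 0 ≤ r) (x : ℝ) : gumbelCDF r c x ∈ Set.Icc 0 1 :=
  ⟨(exp_pos _).le, exp_le_one_iff.2 (neg_nonpos.2 (by positivity))⟩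

lemma tendsto_gumbelCDF_atTop (r : ℝ) : Tendsto (gumbelCDF r c) atTop (𝓝 1) := by
  have h : Tendsto (fun x => -(x - c)) atTop atBot :=
    tendsto_neg_atTop_atBot.comp (tendsto_atTop_add_const_right _ (-c) tendsto_id)
  have hexponent : Tendsto (fun x => -(r * exp (-(x - c)))) atTop (𝓝 0) := by
    simpa using ((tendsto_exp_atBot.comp h).const_mul r).neg
  exact exp_zero ▸ (continuous_exp.tendsto 0).comp hexponent

lemma tendsto_gumbelCDF_atBot (hr : 0 < r) : Tendsto (gumbelCDF r c) atBot (𝓝 0) := by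
  have h : Tendsto (fun x => -(x - c)) atBot atTop :=
    tendsto_neg_atBot_atTop.comp (tendsto_atBot_add_const_right _ (-c) tendsto_id)
  exact tendsto_exp_atBot.comp
    (tendsto_neg_atTop_atBot.comp ((tendsto_exp_atTop.comp h).const_mul_atTop hr))

lemma integrable_gumbelPDF (hr : 0 ≤ r) : Integrable (gumbelPDF r c) :=
  integrable_deriv_of_nonneg_of_bounded (hasDerivAt_gumbelCDF c r) (gumbelPDF_nonneg c hr)
    (gumbelCDF_mem_Icc c hr)

lemma integral_Iic_gumbelPDF (hr : 0 < r) (t : ℝ) :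
    ∫ x in Iic t, gumbelPDF r c x = gumbelCDF r c t := by
  simpa using integral_Iic_of_hasDerivAt_of_tendsto' (fun x _ => hasDerivAt_gumbelCDF c r x)
    (integrable_gumbelPDF c hr.le).integrableOn (tendsto_gumbelCDF_atBot c hr)

lemma integral_gumbelPDF (hr : 0 < r) : ∫ x, gumbelPDF r c x = 1 := by
  simpa using integral_of_hasDerivAt_of_tendsto (hasDerivAt_gumbelCDF c r)
    (integrable_gumbelPDF c hr.le) (tendsto_gumbelCDF_atBot c hr) (tendsto_gumbelCDF_atTop c r)

lemma gumbelPDF_mul_gumbelCDF {s : ℝ} (hrs : r + s ≠ 0) (x : ℝ) :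
    gumbelPDF r c x * gumbelCDF s c x = r / (r + s) * gumbelPDF (r + s) c x := by
  simp only [gumbelPDF, gumbelCDF]
  rw [mul_assoc _ (exp _), ← exp_add]
  field_simp
  ring_nf

lemma gumbelCDF_sub (r c' d x : ℝ) :
    gumbelCDF r c (x - d) = gumbelCDF (r * exp (c + d - c')) c' x := by
  simp only [gumbelCDF, mul_assoc, ← exp_add]
  ring_nf

noncomputable def gumbelMeasure : Measure ℝ :=
  volume.withDensity fun x => ENNReal.ofReal (gumbelPDF 1 c x)

lemma gumbelMeasure_apply {s : Set ℝ} (hs : MeasurableSet s) :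
    gumbelMeasure c s = ENNReal.ofReal (∫ x in s, gumbelPDF 1 c x) := by
  rw [gumbelMeasure, withDensity_apply _ hs, ofReal_integral_eq_lintegral_ofReal
    (integrable_gumbelPDF c zero_le_one).integrableOn
    (ae_of_all _ (gumbelPDF_nonneg c zero_le_one))]

instance : IsProbabilityMeasure (gumbelMeasure c) :=
  ⟨by rw [gumbelMeasure_apply c MeasurableSet.univ, Measure.restrict_univ,
    integral_gumbelPDF c one_pos, ENNReal.ofReal_one]⟩

lemma gumbelMeasure_Iic (t : ℝ) :
    gumbelMeasure c (Iic t) = ENNReal.ofReal (gumbelCDF 1 c t) := by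
  rw [gumbelMeasure_apply c measurableSet_Iic, integral_Iic_gumbelPDF c one_pos]

lemma gumbelMeasure_Iio (t : ℝ) :
    gumbelMeasure c (Iio t) = ENNReal.ofReal (gumbelCDF 1 c t) := by
  have hatom : gumbelMeasure c {t} = 0 :=
    withDensity_absolutelyContinuous _ _ (Real.volume_singleton)
  rw [measure_congr (Iio_ae_eq_Iic' hatom), gumbelMeasure_Iic]

lemma lintegral_gumbelCDF_gumbelMeasure {s : ℝ} (hs : 0 ≤ s) :
    ∫⁻ x, ENNReal.ofReal (gumbelCDF s c x) ∂gumbelMeasure c =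
      ENNReal.ofReal (1 / (1 + s)) := by
  have hpos : (0 : ℝ) < 1 + s := by linarith
  have hdensity : ∀ x, ENNReal.ofReal (gumbelPDF 1 c x) * ENNReal.ofReal (gumbelCDF s c x) =
      ENNReal.ofReal (1 / (1 + s) * gumbelPDF (1 + s) c x) := fun x => by
    rw [← ENNReal.ofReal_mul (gumbelPDF_nonneg c zero_le_one x),
      gumbelPDF_mul_gumbelCDF c hpos.ne']
  rw [gumbelMeasure, lintegral_withDensity_eq_lintegral_mul_non_measurable _
    (by unfold gumbelPDF; fun_prop) (ae_of_all _ fun _ => ENNReal.ofReal_lt_top)]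
  simp only [Pi.mul_apply, hdensity]
  rw [← ofReal_integral_eq_lintegral_ofReal ((integrable_gumbelPDF c hpos.le).const_mul _)
      (ae_of_all _ fun x => mul_nonneg (by positivity) (gumbelPDF_nonneg c hpos.le x)),
    integral_const_mul, integral_gumbelPDF c hpos, mul_one]

end Gumbel

lemma map_eq_gumbelMeasure {Ω : Type*} [MeasurableSpace Ω] {μ : Measure Ω}
    [IsProbabilityMeasure μ] {X : Ω → ℝ} {c : ℝ} (hX : Measurable X)
    (hcdf : ∀ t, μ {ω | X ω ≤ t} = ENNReal.ofReal (exp (-exp (-(t - c))))) :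
    μ.map X = gumbelMeasure c := by
  have := Measure.isProbabilityMeasure_map (μ := μ) hX.aemeasurable
  refine Measure.ext_of_Iic _ _ fun t => ?_
  rw [Measure.map_apply hX measurableSet_Iic, gumbelMeasure_Iic, gumbelCDF, one_mul]
  exact hcdf t

lemma measure_lt_sub_eq_lintegral {Ω : Type*} [MeasurableSpace Ω] {μ : Measure Ω}
    [IsFiniteMeasure μ] {X Y : Ω → ℝ} (hX : Measurable X) (hY : Measurable Y)
    (hindep : IndepFun X Y μ) (δ : ℝ) :
    μ {ω | δ < X ω - Y ω} = ∫⁻ x, μ.map Y (Iio (x - δ)) ∂μ.map X := by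
  have hs : MeasurableSet {p : ℝ × ℝ | δ < p.1 - p.2} :=
    measurableSet_lt measurable_const (measurable_fst.sub measurable_snd)
  have hslice : ∀ x : ℝ, Prod.mk x ⁻¹' {p : ℝ × ℝ | δ < p.1 - p.2} = Iio (x - δ) := fun x => by
    ext y
    simp only [Set.mem_preimage, Set.mem_ofPred_eq, Set.mem_Iio]
    constructor <;> intro h <;> linarith
  rw [show {ω | δ < X ω - Y ω} = (fun ω => (X ω, Y ω)) ⁻¹' {p | δ < p.1 - p.2} from rfl,
    ← Measure.map_apply (hX.prodMk hY) hs,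
    (indepFun_iff_map_prod_eq_prod_map_map hX.aemeasurable hY.aemeasurable).1 hindep,
    Measure.prod_apply hs]
  simp only [hslice]

theorem gumbel_diff_tail_prob {Ω : Type*} [MeasurableSpace Ω] (μ : Measure Ω)
    [IsProbabilityMeasure μ] (X Y : Ω → ℝ) (a b δ : ℝ)
    (hX : Measurable X) (hY : Measurable Y)
    (hindep : IndepFun X Y μ)
    (hXcdf : ∀ t : ℝ, μ {ω | X ω ≤ t} = ENNReal.ofReal (Real.exp (-Real.exp (-(t - a)))))
    (hYcdf : ∀ t : ℝ, μ {ω | Y ω ≤ t} = ENNReal.ofReal (Real.exp (-Real.exp (-(t - b))))) :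
    μ {ω | X ω - Y ω > δ} = ENNReal.ofReal (sigma ((a - b) - δ)) := by
  calc μ {ω | X ω - Y ω > δ}
      = ∫⁻ x, μ.map Y (Iio (x - δ)) ∂μ.map X := measure_lt_sub_eq_lintegral hX hY hindep δ
    _ = ∫⁻ x, ENNReal.ofReal (gumbelCDF (exp (b + δ - a)) a x) ∂gumbelMeasure a := by
      simp only [map_eq_gumbelMeasure hX hXcdf, map_eq_gumbelMeasure hY hYcdf,
        gumbelMeasure_Iio, gumbelCDF_sub b 1 a, one_mul]
    _ = ENNReal.ofReal (sigma ((a - b) - δ)) := by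
      rw [lintegral_gumbelCDF_gumbelMeasure a (exp_pos _).le, sigma]
      ring_nf
end

section
/- Let π* be the optimal policy π*(y) = π_ref(y) exp(r(y)/β)/Z. Then for any two responses y_w, y_l, the Bradley–Terry probability satisfies σ(r(y_w) − r(y_l)) = σ(β log(π*(y_w)/π_ref(y_w)) − β log(π*(y_l)/π_ref(y_l))); i.e., the intractable normalizer Z cancels in the reward difference. -/
/-!
`β log (π*(y) / π_ref(y)) = r(y) - β log Z`, so the normalizer enters only as an additive constant,
which cancels in the reward difference; `log Z` is meaningful because `Z` is a sum of positive terms.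
-/

open scoped BigOperators

lemma mul_log_tilted_div_self {p x β Z : ℝ} (hp : p ≠ 0) (hβ : β ≠ 0) (hZ : 0 < Z) :
    β * Real.log (p * Real.exp (x / β) / Z / p) = x - β * Real.log Z := by
  rw [div_right_comm, mul_div_cancel_left₀ _ hp, Real.log_div (Real.exp_ne_zero _) hZ.ne',
    Real.log_exp, mul_sub, mul_div_cancel₀ _ hβ]

theorem dpo_normalizer_cancels_general
    {Y : Type*}
    (πref : Y → ℝ) (r : Y → ℝ) (β : ℝ)
    (hβ : 0 < β)
    (href_pos : ∀ y, 0 < πref y)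
    (Z : ℝ) (hZ : HasSum (fun y => πref y * Real.exp (r y / β)) Z)
    (πstar : Y → ℝ) (hπstar : ∀ y, πstar y = πref y * Real.exp (r y / β) / Z) :
    ∀ y_w y_l : Y,
      sigma (r y_w - r y_l) =
      sigma (β * Real.log (πstar y_w / πref y_w) - β * Real.log (πstar y_l / πref y_l)) := by
  intro y_w y_l
  have hterm_pos : ∀ y, 0 < πref y * Real.exp (r y / β) :=
    fun y => mul_pos (href_pos y) (Real.exp_pos _)
  have hZ_pos : 0 < Z := hasSum_lt (fun y => (hterm_pos y).le) (hterm_pos y_w) hasSum_zero hZ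
  have hlog : ∀ y, β * Real.log (πstar y / πref y) = r y - β * Real.log Z := fun y => by
    rw [hπstar y]
    exact mul_log_tilted_div_self (href_pos y).ne' hβ.ne' hZ_pos
  rw [hlog, hlog, sub_sub_sub_cancel_right]

theorem dpo_normalizer_cancels
    {Y : Type*} [Countable Y]
    (πref : Y → ℝ) (r : Y → ℝ) (β : ℝ)
    (hβ : 0 < β)
    (href_pos : ∀ y, 0 < πref y)
    (href_sum : HasSum πref 1)
    (hr_bdd : ∃ C : ℝ, ∀ y, |r y| ≤ C)
    (Z : ℝ) (hZ : HasSum (fun y => πref y * Real.exp (r y / β)) Z)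
    (πstar : Y → ℝ) (hπstar : ∀ y, πstar y = πref y * Real.exp (r y / β) / Z) :
    ∀ y_w y_l : Y,
      sigma (r y_w - r y_l) =
      sigma (β * Real.log (πstar y_w / πref y_w) - β * Real.log (πstar y_l / πref y_l)) :=
  dpo_normalizer_cancels_general πref r β hβ href_pos Z hZ πstar hπstar
end
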